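/- arXiv:2109.11733 — 3 statements merged into one kernel-verified Lean document; each statement's English description precedes it below -/
import Mathlib

section
/- Let λ be a p-regular partition of n all of whose parts are coprime to p. Then every permutation of S_n whose p'-part is conjugate to an element of cycle type λ itself has cycle type λ. Equivalently, the p-equivalence class of λ coincides with the single conjugacy class of cycle type λ. -/
/-- The cycle type of the `p'`-part of a permutation of cycle type `μ`:
each part `a = k·p^m` (with `p ∤ k`) is replaced by `p^m` copies of `k`. -/
def pPrimeParts (p : ℕ) {n : ℕ} (μ : Nat.Partition n) : Multiset ℕ :=
  μ.parts.bind (fun a => Multiset.replicate (ordProj[p] a) (ordCompl[p] a))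

lemma pPrimeParts_eq_self (p : ℕ) {n : ℕ} (μ : Nat.Partition n)
    (h : ∀ i ∈ μ.parts, ¬ p ∣ i) : pPrimeParts p μ = μ.parts := by
  unfold pPrimeParts
  have hc : ∀ a ∈ μ.parts,
      Multiset.replicate (ordProj[p] a) (ordCompl[p] a) = ({a} : Multiset ℕ) := by
    intro a ha
    have : a.factorization p = 0 := Nat.factorization_eq_zero_of_not_dvd (h a ha)
    simp [this, Multiset.replicate_one]
  rw [Multiset.bind_congr hc, Multiset.bind_singleton]
  simp

/-- If `λ` is a `p`-regular partition of `n` all of whose parts are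
coprime to `p`, then any partition `μ` of `n` whose `p'`-part cycle type agrees with
that of `λ` (i.e. lies in the `p`-equivalence class of `λ`) equals `λ`:
`C_{λ,p} = C_λ`. -/
theorem pEquiv_class_eq_of_coprime (p n : ℕ) (hp : p.Prime)
    (lam : Nat.Partition n)
    (hreg : ∀ i, lam.parts.count i < p)
    (hcop : ∀ i ∈ lam.parts, ¬ p ∣ i) :
    ∀ μ : Nat.Partition n, pPrimeParts p μ = pPrimeParts p lam → μ = lam := by
  intro μ hμ
  have hlam : pPrimeParts p lam = lam.parts := pPrimeParts_eq_self p lam hcop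
  have hμcop : ∀ a ∈ μ.parts, ¬ p ∣ a := by
    intro a ha hdvd
    have ha0 : a ≠ 0 := (μ.parts_pos ha).ne'
    have hm : 0 < a.factorization p :=
      Nat.Prime.factorization_pos_of_dvd hp ha0 hdvd
    set k := ordCompl[p] a with hk
    have hle : Multiset.replicate (ordProj[p] a) k ≤ pPrimeParts p μ :=
      Multiset.le_bind _ ha
    have hcount : (ordProj[p] a) ≤ (pPrimeParts p μ).count k := by
      have := Multiset.count_le_of_le k hle
      simpa using this
    rw [hμ, hlam] at hcount
    have hpow : p ≤ ordProj[p] a := by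
      calc p = p ^ 1 := (pow_one p).symm
        _ ≤ p ^ a.factorization p := Nat.pow_le_pow_right hp.pos hm
    exact absurd (lt_of_le_of_lt (hpow.trans hcount) (hreg k)) (lt_irrefl _)
  have : μ.parts = lam.parts := by
    rw [← pPrimeParts_eq_self p μ hμcop, hμ, hlam]
  exact Nat.Partition.ext this
end

section
/- Let q and r be compositions of n that are rearrangements of each other. Then the number of ℓ(r)×ℓ(q) matrices with nonnegative integer entries, with row sums equal to the parts of r, column sums equal to the parts of q, exactly one nonzero entry per column, and such that reading the nonzero entries row by row recovers the composition r, equals ∏_i m_i(r)!, where m_i(r) is the number of parts of r equal to i. -/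
/-- The set `N^s_{r,q}` of matrices with row sums `r`, column sums `q`, and
row-reading (after deleting zeros) equal to `s`. -/
def NSet {n : ℕ} (s r q : Composition n) : Set (Fin r.length → Fin q.length → ℕ) :=
  {A | (∀ i, ∑ j, A i j = r.blocksFun i) ∧ (∀ j, ∑ i, A i j = q.blocksFun j) ∧
    ((List.ofFn (fun i => List.ofFn (fun j => A i j))).flatten.filter
      (fun x => decide (x ≠ 0))) = s.blocks}

/-- The subset `overline{N}^s_{r,q}` of matrices with exactly one nonzero entry per
column. -/
def NBarSet {n : ℕ} (s r q : Composition n) : Set (Fin r.length → Fin q.length → ℕ) :=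
  {A | A ∈ NSet s r q ∧ ∀ j, ∃! i, A i j ≠ 0}

/-! In a matrix of `N̄^r_{r,q}` the nonzero entries of row `i` are positive and sum to `r_i`,
while altogether they read off the `ℓ(r)` parts of `r`; so every row has exactly one nonzero
entry. Such matrices are therefore the bijections `σ` from columns to rows with `r_{σ j} = q_j`.
Since `q ≈ r`, these form a coset of the group of permutations preserving `j ↦ q_j`, which is
`∏ᵢ S_{mᵢ(r)}`. -/

open Equiv Finset
open scoped Nat

namespace List

theorem sum_filter_ne_zero {M : Type*} [AddMonoid M] [DecidableEq M] (l : List M) :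
    (l.filter (· ≠ 0)).sum = l.sum := by
  induction l with
  | nil => rfl
  | cons x l ih => rw [filter_cons]; split_ifs with hx <;> simp_all

theorem count_ofFn {α : Type*} [DecidableEq α] {k : ℕ} (f : Fin k → α) (a : α) :
    (ofFn f).count a = Fintype.card {i // f i = a} := by
  rw [Fintype.card_subtype, ← Multiset.coe_count, ← Fin.univ_val_map, Multiset.count_map]
  simp [Finset.card, eq_comm]

theorem flatten_ofFn_singleton {α : Type*} {k : ℕ} (f : Fin k → α) :
    (ofFn fun i => [f i]).flatten = ofFn f := by
  rw [← flatMap_singleton' (ofFn f), flatMap_def, map_ofFn]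
  rfl

theorem filter_ofFn_eq_singleton_iff {α : Type*} {k : ℕ} (p : α → Prop) [DecidablePred p]
    (f : Fin k → α) (y : α) :
    (ofFn f).filter (fun x => decide (p x)) = [y] ↔
      ∃ j₀, (∀ j, p (f j) ↔ j = j₀) ∧ f j₀ = y := by
  rw [ofFn_eq_map, filter_map, map_eq_singleton_iff]
  refine exists_congr fun j₀ => and_congr_left fun _ => ?_
  constructor
  · intro h j
    simpa using congrArg (j ∈ ·) h
  · intro h
    rw [filter_congr (q := (· == j₀)) fun j _ => by rw [Bool.eq_iff_iff]; simp [h j]]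
    rw [filter_beq, count_eq_one_of_mem (nodup_finRange k) (mem_finRange j₀), replicate_one]

end List

theorem Composition.blocksFun_ne_zero {n : ℕ} (c : Composition n) (i : Fin c.length) :
    c.blocksFun i ≠ 0 :=
  Nat.one_le_iff_ne_zero.1 (c.one_le_blocksFun i)

theorem Composition.card_fiber_blocksFun {n : ℕ} (c : Composition n) (v : ℕ) :
    Nat.card {i // c.blocksFun i = v} = c.blocks.count v := by
  rw [← c.ofFn_blocksFun, List.count_ofFn, Nat.card_eq_fintype_card]

theorem Composition.card_perm_comp_blocksFun_eq {n : ℕ} (c : Composition n) :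
    Nat.card {π : Perm (Fin c.length) // c.blocksFun ∘ π = c.blocksFun} =
      ∏ v ∈ range (n + 1), (c.blocks.count v)! := by
  rw [Nat.card_eq_fintype_card, DomMulAct.stabilizer_card']
  refine prod_subset (fun v hv => ?_) (fun v _ hv => ?_) |>.trans (prod_congr rfl fun v _ => ?_)
  · obtain ⟨i, -, rfl⟩ := mem_image.1 hv
    exact mem_range_succ_iff.2 (c.blocksFun_le i)
  · have : IsEmpty {i // c.blocksFun i = v} :=
      ⟨fun ⟨i, hi⟩ => hv (hi ▸ mem_image_of_mem _ (mem_univ i))⟩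
    rw [Fintype.card_eq_zero, Nat.factorial_zero]
  · rw [← Nat.card_eq_fintype_card, c.card_fiber_blocksFun]

theorem card_equiv_comp_eq_card_perm {α β ι : Type*} [Finite α] [Finite β] {f : α → ι}
    {g : β → ι} (h : ∀ c, Nat.card {a // f a = c} = Nat.card {b // g b = c}) :
    Nat.card {σ : α ≃ β // g ∘ σ = f} = Nat.card {π : Perm α // f ∘ π = f} := by
  have e : ∀ c, {a // f a = c} ≃ {b // g b = c} := fun c => (Finite.card_eq.1 (h c)).some
  set τ := ofFiberEquiv e
  have hτ : f ∘ τ.symm = g := funext fun b => by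
    have := ofFiberEquiv_map e (τ.symm b)
    rwa [apply_symm_apply, eq_comm] at this
  refine Nat.card_congr (subtypeEquiv (equivCongr (.refl α) τ.symm) fun σ => ?_)
  simp [← hτ, Function.comp_assoc]

section Matrices

variable {n : ℕ} {q r : Composition n}

theorem filter_row_eq_singleton_of_mem_NSet {A : Fin r.length → Fin q.length → ℕ}
    (hA : A ∈ NSet r r q) (i : Fin r.length) :
    (List.ofFn (A i)).filter (fun x => decide (x ≠ 0)) = [r.blocksFun i] := by
  obtain ⟨hrow, -, hread⟩ := hA
  set row := fun i => (List.ofFn (A i)).filter (fun x => decide (x ≠ 0))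
  have hsum : ∀ i, (row i).sum = r.blocksFun i := fun i => by
    rw [List.sum_filter_ne_zero, List.sum_ofFn, hrow]
  have hlen : ∑ i, (row i).length = ∑ _i : Fin r.length, 1 := by
    have := congrArg List.length hread
    rw [List.filter_flatten, List.map_ofFn, List.length_flatten, List.map_ofFn, List.sum_ofFn,
      r.blocks_length] at this
    simp only [sum_const, Finset.card_fin, smul_eq_mul, mul_one]
    exact this
  have hne : ∀ i, 1 ≤ (row i).length := fun i => List.length_pos_iff.2 fun h =>
    r.blocksFun_ne_zero i (by rw [← hsum i, h, List.sum_nil])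
  obtain ⟨a, ha⟩ := List.length_eq_one_iff.1 <|
    ((sum_eq_sum_iff_of_le fun i _ => hne i).1 hlen.symm i (mem_univ i)).symm
  change row i = _
  rw [ha, ← hsum i, ha, List.sum_singleton]

def matrixOfEquiv (σ : Fin q.length ≃ Fin r.length) : Fin r.length → Fin q.length → ℕ :=
  fun i j => if σ j = i then q.blocksFun j else 0

theorem matrixOfEquiv_ne_zero_iff (σ : Fin q.length ≃ Fin r.length) (i : Fin r.length)
    (j : Fin q.length) : matrixOfEquiv σ i j ≠ 0 ↔ σ j = i := by
  by_cases h : σ j = i <;> simp [matrixOfEquiv, h, q.blocksFun_ne_zero]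

theorem matrixOfEquiv_injective :
    Function.Injective (matrixOfEquiv : (Fin q.length ≃ Fin r.length) → _) := fun σ τ h =>
  Equiv.ext fun j =>
    ((matrixOfEquiv_ne_zero_iff τ _ j).1 (h ▸ (matrixOfEquiv_ne_zero_iff σ _ j).2 rfl)).symm

theorem matrixOfEquiv_mem_NBarSet {σ : Fin q.length ≃ Fin r.length}
    (hσ : r.blocksFun ∘ σ = q.blocksFun) : matrixOfEquiv σ ∈ NBarSet r r q := by
  have hrow : ∀ i, (List.ofFn (matrixOfEquiv σ i)).filter (fun x => decide (x ≠ 0)) =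
      [r.blocksFun i] := fun i => by
    refine (List.filter_ofFn_eq_singleton_iff _ _ _).2 ⟨σ.symm i, fun j => ?_, ?_⟩
    · rw [matrixOfEquiv_ne_zero_iff, ← σ.eq_symm_apply]
    · simp [matrixOfEquiv, ← hσ]
  refine ⟨⟨fun i => ?_, fun j => ?_, ?_⟩, fun j => ⟨σ j, ?_, fun i hi => ?_⟩⟩
  · rw [← List.sum_ofFn, ← List.sum_filter_ne_zero, hrow, List.sum_singleton]
  · simp [matrixOfEquiv]
  · rw [List.filter_flatten, List.map_ofFn]
    exact (congrArg List.flatten (congrArg List.ofFn (funext hrow))).trans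
      ((List.flatten_ofFn_singleton _).trans r.ofFn_blocksFun)
  · exact (matrixOfEquiv_ne_zero_iff σ _ j).2 rfl
  · exact ((matrixOfEquiv_ne_zero_iff σ i j).1 hi).symm

theorem exists_matrixOfEquiv_eq {A : Fin r.length → Fin q.length → ℕ}
    (hA : A ∈ NBarSet r r q) :
    ∃ σ : Fin q.length ≃ Fin r.length,
      r.blocksFun ∘ σ = q.blocksFun ∧ matrixOfEquiv σ = A := by
  obtain ⟨hN, hcol⟩ := hA
  choose colSupp hcolSupp hcolUniq using hcol
  choose rowSupp hrowSupp hrowVal using fun i =>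
    (List.filter_ofFn_eq_singleton_iff _ _ _).1 (filter_row_eq_singleton_of_mem_NSet hN i)
  let σ : Fin q.length ≃ Fin r.length :=
    { toFun := colSupp
      invFun := rowSupp
      left_inv := fun j => ((hrowSupp _ j).1 (hcolSupp j)).symm
      right_inv := fun i => (hcolUniq _ i <| (hrowVal i).trans_ne (r.blocksFun_ne_zero i)).symm }
  have hentry : ∀ i j, A i j = if σ j = i then q.blocksFun j else 0 := fun i j => by
    split_ifs with h
    · rw [← hN.2.1 j, sum_eq_single_of_mem i (mem_univ i) fun i' _ hi' => ?_]
      by_contra hne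
      exact hi' (h ▸ hcolUniq j i' hne)
    · by_contra hne
      exact h (hcolUniq j i hne).symm
  refine ⟨σ, funext fun j => ?_, funext₂ fun i j => (hentry i j).symm⟩
  have := hrowVal (σ j)
  rwa [show rowSupp (σ j) = j from σ.left_inv j, hentry, if_pos rfl, eq_comm] at this

theorem card_NBarSet_eq_card_equiv :
    Nat.card (NBarSet r r q) =
      Nat.card {σ : Fin q.length ≃ Fin r.length // r.blocksFun ∘ σ = q.blocksFun} := by
  refine (Nat.card_eq_of_bijective
    (fun σ => ⟨matrixOfEquiv σ.1, matrixOfEquiv_mem_NBarSet σ.2⟩)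
    ⟨fun σ τ h => Subtype.ext (matrixOfEquiv_injective (congrArg Subtype.val h)), ?_⟩).symm
  rintro ⟨A, hA⟩
  obtain ⟨σ, hσ, rfl⟩ := exists_matrixOfEquiv_eq hA
  exact ⟨⟨σ, hσ⟩, rfl⟩

end Matrices

/-- If `q ≈ r` (the compositions are rearrangements of each other),
then `|overline{N}^r_{r,q}| = ∏_i m_i(r)!`. -/
theorem card_NBar_eq (n : ℕ) (q r : Composition n) (hqr : q.blocks.Perm r.blocks) :
    Nat.card (NBarSet r r q) =
      ∏ i ∈ Finset.range (n + 1), (r.blocks.count i).factorial := by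
  rw [card_NBarSet_eq_card_equiv, card_equiv_comp_eq_card_perm fun v => by
    rw [q.card_fiber_blocksFun, r.card_fiber_blocksFun, hqr.count_eq],
    q.card_perm_comp_blocksFun_eq]
  simp_rw [hqr.count_eq]
end

section
/- Let w(1), …, w(k) be words over ℕ with pairwise disjoint alphabets such that the concatenation v = w(1)w(2)⋯w(k) is a permutation of {1,…,n} (in one-line notation), each w(i) has its least letter in its last position, and these least letters are in increasing order across i. Then v is the minimum, with respect to the reverse colexicographic order on S_n, among all permutations of {1,…,n} containing each w(i) as a (not necessarily contiguous) subword. -/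
/-- The reverse colexicographic order on words: `w ≤ v` iff `w = v` or, at the last
position (reading from the right) where they differ, `w` has the larger letter. -/
def rcoLE (w v : List ℕ) : Prop :=
  w = v ∨ List.Lex (· < ·) v.reverse w.reverse

/-! Reverse all words: each word then starts with its least letter, and these least letters
decrease along the list. Let `u` have the letters of `v` and contain every word as a subword.
The first letter `x` of `u` is the first letter of the word containing it, since an earlier
letter of that word would precede `x` in `u`. If that word is the first one, `x` is also the
first letter of `v`, and we strip it from both; otherwise `x` is the least letter of a later
word, hence smaller than the first letter of `v`, so `u` is lexicographically smaller. -/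

namespace List

variable {α : Type*}

theorem Sublist.of_cons_of_notMem {a : α} {w l : List α} (h : w <+ a :: l) (ha : a ∉ w) :
    w <+ l := by
  rcases sublist_cons_iff.mp h with h | ⟨t, rfl, _⟩
  · exact h
  · exact absurd mem_cons_self ha

theorem Sublist.head?_eq_of_cons_of_mem {a : α} {w l : List α} (h : w <+ a :: l) (ha : a ∈ w)
    (hal : a ∉ l) : w.head? = some a := by
  rcases sublist_cons_iff.mp h with h | ⟨t, rfl, _⟩
  · exact absurd (h.subset ha) hal
  · rfl

theorem flatten_eq_or_lex_of_forall_sublist {r : α → α → Prop} :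
    ∀ {R : List (List α)} {u : List α}, u.Nodup → u ~ R.flatten →
      R.Pairwise (fun v w => ∀ z ∈ w.head?, ∀ y ∈ v, r z y) → (∀ w ∈ R, w <+ u) →
      R.flatten = u ∨ Lex r u R.flatten
  | [], _, _, hperm, _, _ => Or.inl (perm_nil.mp hperm).symm
  | [] :: R, u, hnd, hperm, hR, hsub =>
    flatten_eq_or_lex_of_forall_sublist (R := R) (u := u) hnd hperm hR.of_cons
      fun w hw => hsub w (mem_cons_of_mem _ hw)
  | (_ :: _) :: _, [], _, hperm, _, _ => by simp at hperm
  | (m :: t) :: R, x :: u, hnd, hperm, hR, hsub => by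
    obtain ⟨hxu, hu⟩ := nodup_cons.mp hnd
    obtain ⟨w, hw, hxw⟩ : ∃ w ∈ (m :: t) :: R, x ∈ w :=
      mem_flatten.mp (hperm.subset mem_cons_self)
    have hwx : w.head? = some x := (hsub w hw).head?_eq_of_cons_of_mem hxw hxu
    rcases mem_cons.mp hw with rfl | hwR
    · obtain rfl : m = x := by simpa using hwx
      have hperm' : u ~ (t :: R).flatten := by simpa using hperm
      have hmR : ∀ w ∈ R, m ∉ w := fun w hw hmw =>
        hxu (hperm'.symm.subset (mem_flatten.mpr ⟨w, mem_cons_of_mem _ hw, hmw⟩))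
      have hsub' : ∀ w ∈ t :: R, w <+ u := by
        rintro w (_ | ⟨_, hw⟩)
        · exact cons_sublist_cons.mp (hsub _ mem_cons_self)
        · exact (hsub w (mem_cons_of_mem _ hw)).of_cons_of_notMem (hmR w hw)
      have hR' : (t :: R).Pairwise (fun v w => ∀ z ∈ w.head?, ∀ y ∈ v, r z y) :=
        pairwise_cons.mpr ⟨fun w hw z hz y hy =>
          pairwise_cons.mp hR |>.1 w hw z hz y (mem_cons_of_mem _ hy), hR.of_cons⟩
      exact (flatten_eq_or_lex_of_forall_sublist (R := t :: R) (u := u) hu hperm' hR' hsub').imp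
        (congrArg (m :: ·)) Lex.cons
    · exact Or.inr (Lex.rel ((pairwise_cons.mp hR).1 w hwR x hwx m mem_cons_self))
termination_by R u => u.length + R.length

end List

theorem rcoLE_flatten_of_forall_sublist {L : List (List ℕ)} {u : List ℕ} (hu : u.Nodup)
    (hperm : u.Perm L.flatten) (hL : L.Pairwise (fun v w => ∀ z ∈ v.getLast?, ∀ y ∈ w, z < y))
    (hsub : ∀ w ∈ L, w.Sublist u) : rcoLE L.flatten u := by
  have hsub' : ∀ w ∈ (L.map List.reverse).reverse, w.Sublist u.reverse := by
    simp only [List.mem_reverse, List.mem_map]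
    rintro _ ⟨v, hv, rfl⟩
    exact List.reverse_sublist.mpr (hsub v hv)
  have hL' : (L.map List.reverse).reverse.Pairwise
      (fun v w => ∀ z ∈ w.head?, ∀ y ∈ v, z < y) := by
    simpa [List.pairwise_reverse, List.pairwise_map] using hL
  have key := List.flatten_eq_or_lex_of_forall_sublist (List.nodup_reverse.mpr hu)
    (by simpa [← List.reverse_flatten] using hperm) hL' hsub'
  rwa [← List.reverse_flatten, List.reverse_inj] at key

theorem least_perm_containing_subwords_general (n : ℕ) (L : List (List ℕ))
    (hperm : L.flatten.Perm ((List.range n).map (· + 1)))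
    (hmin : ∀ l ∈ L, l ≠ [] ∧ ∀ x ∈ l, l.getLast! ≤ x)
    (hinc : L.Pairwise (fun a b => a.getLast! < b.getLast!)) :
    ∀ u : List ℕ, u.Perm ((List.range n).map (· + 1)) →
      (∀ l ∈ L, l.Sublist u) → rcoLE L.flatten u := by
  intro u hu hsub
  have hrange : ((List.range n).map (· + 1)).Nodup := List.nodup_range.map (add_left_injective 1)
  refine rcoLE_flatten_of_forall_sublist (hu.nodup_iff.mpr hrange) (hu.trans hperm.symm) ?_ hsub
  refine hinc.imp_of_mem fun {v w} _ hw hlt z hz y hy => ?_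
  have hz : z = v.getLast! := (List.getLast!_of_getLast? hz).symm
  exact hz ▸ hlt.trans_le ((hmin w hw).2 y hy)

/-- Let `w(1), …, w(k)` be words with pairwise disjoint alphabets
whose concatenation `v` is a permutation of `{1, …, n}` (in one-line notation), such
that each `w(i)` has its least letter in its last position and these least letters
increase with `i`.  Then `v` is the least permutation of `{1, …, n}` (in reverse
colexicographic order) containing each `w(i)` as a subword. -/
theorem least_perm_containing_subwords (n : ℕ) (L : List (List ℕ))
    (hdisj : L.Pairwise (fun a b => ∀ x ∈ a, x ∉ b))
    (hperm : L.flatten.Perm ((List.range n).map (· + 1)))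
    (hmin : ∀ l ∈ L, l ≠ [] ∧ ∀ x ∈ l, l.getLast! ≤ x)
    (hinc : L.Pairwise (fun a b => a.getLast! < b.getLast!)) :
    ∀ u : List ℕ, u.Perm ((List.range n).map (· + 1)) →
      (∀ l ∈ L, l.Sublist u) → rcoLE L.flatten u :=
  least_perm_containing_subwords_general n L hperm hmin hinc
end
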